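/- arXiv:0902.2150 — 2 statements merged into one kernel-verified Lean document; each statement's English description precedes it below -/
import Mathlib

section
/- Let H be a connected graph with girth at least 7 whose square G = H² is not complete, and let F be the subgraph of G formed by the forced edges. Then every vertex of G not incident to any forced edge belongs to exactly one maximal clique of G. -/
open SimpleGraph

variable {V : Type*}

/-- The square of a graph: `x` and `y` are adjacent iff `1 ≤ d_H(x,y) ≤ 2`. -/
def graphSq (H : SimpleGraph V) : SimpleGraph V where
  Adj x y := x ≠ y ∧ (H.Adj x y ∨ ∃ z, H.Adj x z ∧ H.Adj z y)
  symm := ⟨by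
    rintro x y ⟨hxy, h | ⟨z, h1, h2⟩⟩
    · exact ⟨hxy.symm, Or.inl h.symm⟩
    · exact ⟨hxy.symm, Or.inr ⟨z, h2.symm, h1.symm⟩⟩⟩
  loopless := ⟨fun x h => h.1 rfl⟩

/-- `Q` is a maximal clique of `G`. -/
def IsMaxClique (G : SimpleGraph V) (Q : Set V) : Prop :=
  G.IsClique Q ∧ ∀ R : Set V, G.IsClique R → Q ⊆ R → R = Q

/-- `xy` is a forced edge of `G`: it lies in at least two distinct maximal cliques. -/
def Forced (G : SimpleGraph V) (x y : V) : Prop :=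
  G.Adj x y ∧ ∃ Q₁ Q₂ : Set V, Q₁ ≠ Q₂ ∧ IsMaxClique G Q₁ ∧ IsMaxClique G Q₂ ∧
    x ∈ Q₁ ∧ y ∈ Q₁ ∧ x ∈ Q₂ ∧ y ∈ Q₂

/-- The subgraph of `G` consisting of all forced edges. -/
def forcedSubgraph (G : SimpleGraph V) : SimpleGraph V where
  Adj := Forced G
  symm := ⟨by
    rintro x y ⟨hadj, Q₁, Q₂, hne, h1, h2, hx1, hy1, hx2, hy2⟩
    exact ⟨hadj.symm, Q₁, Q₂, hne, h1, h2, hy1, hx1, hy2, hx2⟩⟩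
  loopless := ⟨fun x h => h.1.ne rfl⟩

/-- `H` contains no cycle of length 3 and no cycle of length 5. -/
def C3C5Free (H : SimpleGraph V) : Prop :=
  ∀ (v : V) (w : H.Walk v v), w.IsCycle → w.length ≠ 3 ∧ w.length ≠ 5

/-- The set `S` induces a star in `F`: at least two vertices, a center adjacent to
all others, and the non-center vertices pairwise non-adjacent. -/
def IsStarOn (F : SimpleGraph V) (S : Set V) : Prop :=
  S.Nontrivial ∧ ∃ c ∈ S, (∀ x ∈ S, x ≠ c → F.Adj c x) ∧
    ∀ x ∈ S, ∀ y ∈ S, x ≠ c → y ≠ c → x ≠ y → ¬ F.Adj x y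

/-!
When `H` has girth at least `7`, every clique of `H²` lies in a closed neighbourhood `N[c]` of `H`:
a vertex within distance `2` of both ends of a path `x m y` must be adjacent or equal to `m`,
as otherwise the connecting paths close up into a cycle of length at most `6`. Hence every maximal
clique of `H²` is some `N[c]`. If `u` lay in two of them, `N[c₁] ≠ N[c₂]`, then `u` has
`H`-neighbours `a ∈ N[c₁]` and `b ∈ N[c₂]`; a maximal clique containing `{u, a, b} ⊆ N[u]` differs
from `N[c₁]` or from `N[c₂]`, so `ua` or `ub` is a forced edge.
-/

theorem SimpleGraph.IsClique.exists_superset_isMaxClique {G : SimpleGraph V} {Q : Set V}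
    (hQ : G.IsClique Q) : ∃ M, Q ⊆ M ∧ IsMaxClique G M := by
  obtain ⟨M, hQM, hM⟩ := zorn_subset_nonempty {R : Set V | G.IsClique R}
    (fun c hc hchain _ => ⟨⋃₀ c, (isClique_sUnion hchain.directedOn).2 hc,
      fun _ => Set.subset_sUnion_of_mem⟩) Q hQ
  exact ⟨M, hQM, hM.1, fun R hR hMR => (hM.2 hR hMR).antisymm hMR⟩

lemma forced_of_mem_of_mem {G : SimpleGraph V} {Q₁ Q₂ : Set V} (hQ₁ : IsMaxClique G Q₁)
    (hQ₂ : IsMaxClique G Q₂) (hne : Q₁ ≠ Q₂) {x y : V} (hxy : x ≠ y)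
    (hx₁ : x ∈ Q₁) (hy₁ : y ∈ Q₁) (hx₂ : x ∈ Q₂) (hy₂ : y ∈ Q₂) : Forced G x y :=
  ⟨hQ₁.1 hx₁ hy₁ hxy, Q₁, Q₂, hne, hQ₁, hQ₂, hx₁, hy₁, hx₂, hy₂⟩

lemma mem_support_forcedSubgraph {G : SimpleGraph V} {Q₁ Q₂ : Set V}
    (hQ₁ : IsMaxClique G Q₁) (hQ₂ : IsMaxClique G Q₂) (hne : Q₁ ≠ Q₂) {u a b : V}
    (hu₁ : u ∈ Q₁) (hu₂ : u ∈ Q₂) (ha : a ∈ Q₁) (hb : b ∈ Q₂) (hau : a ≠ u) (hbu : b ≠ u)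
    (hclique : G.IsClique {u, a, b}) : u ∈ (forcedSubgraph G).support := by
  obtain ⟨Q₃, hsub, hQ₃⟩ := hclique.exists_superset_isMaxClique
  have hu₃ : u ∈ Q₃ := hsub (by simp)
  by_cases h₃₁ : Q₃ = Q₁
  · exact ⟨b, forced_of_mem_of_mem hQ₃ hQ₂ (h₃₁ ▸ hne) hbu.symm hu₃ (hsub (by simp)) hu₂ hb⟩
  · exact ⟨a, forced_of_mem_of_mem hQ₃ hQ₁ h₃₁ hau.symm hu₃ (hsub (by simp)) hu₁ ha⟩

namespace SimpleGraph

variable {H : SimpleGraph V}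

def closedNeighborSet (H : SimpleGraph V) (c : V) : Set V := insert c (H.neighborSet c)

@[simp]
lemma mem_closedNeighborSet {c x : V} : x ∈ H.closedNeighborSet c ↔ x = c ∨ H.Adj c x :=
  Iff.rfl

lemma isClique_closedNeighborSet (c : V) : (graphSq H).IsClique (H.closedNeighborSet c) := by
  rintro a (rfl | ha) b (rfl | hb) hab
  · exact absurd rfl hab
  · exact ⟨hab, .inl hb⟩
  · exact ⟨hab, .inl ha.symm⟩
  · exact ⟨hab, .inr ⟨c, ha.symm, hb⟩⟩

lemma exists_adj_of_mem_closedNeighborSet {u c₁ c₂ : V} (hc : c₁ ≠ c₂)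
    (h₁ : u ∈ H.closedNeighborSet c₁) (h₂ : u ∈ H.closedNeighborSet c₂) :
    ∃ a ∈ H.closedNeighborSet c₁, ∃ b ∈ H.closedNeighborSet c₂, H.Adj u a ∧ H.Adj u b := by
  rcases h₁ with rfl | h₁ <;> rcases h₂ with rfl | h₂
  · exact absurd rfl hc
  · exact ⟨c₂, .inr h₂.symm, c₂, .inl rfl, h₂.symm, h₂.symm⟩
  · exact ⟨c₁, .inl rfl, c₁, .inr h₁.symm, h₁.symm, h₁.symm⟩
  · exact ⟨c₁, .inl rfl, c₂, .inl rfl, h₁.symm, h₂.symm⟩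

lemma le_length_of_isCycle {n : ℕ} (hg : n ≤ H.egirth) {v : V} {w : H.Walk v v}
    (hw : w.IsCycle) : n ≤ w.length :=
  Nat.cast_le.1 (hg.trans (egirth_le_length hw))

lemma eq_of_adj_of_adj_of_five_le_egirth (hg : 5 ≤ H.egirth) {x y m m' : V} (hxy : x ≠ y)
    (hxm : H.Adj x m) (hmy : H.Adj m y) (hxm' : H.Adj x m') (hm'y : H.Adj m' y) : m = m' := by
  by_contra hmm'
  have hw : (Walk.cons hxm (.cons hmy (.cons hm'y.symm (.cons hxm'.symm .nil)))).IsCycle := by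
    have := hxm.ne; have := hmy.ne; have := hxm'.ne; have := hm'y.ne
    simp_all [Walk.cons_isCycle_iff, Sym2.eq, Sym2.rel_iff', Ne.symm]
  exact absurd (le_length_of_isCycle hg hw) (by simp)

lemma no_pentagon (hg : 6 ≤ H.egirth) {a b c d e : V} (hab : H.Adj a b) (hbc : H.Adj b c)
    (hcd : H.Adj c d) (hde : H.Adj d e) (hea : H.Adj e a)
    (hac : a ≠ c) (had : a ≠ d) (hbd : b ≠ d) (hbe : b ≠ e) (hce : c ≠ e) : False := by
  have hw : (Walk.cons hab (.cons hbc (.cons hcd (.cons hde (.cons hea .nil))))).IsCycle := by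
    have := hab.ne; have := hbc.ne; have := hcd.ne; have := hde.ne; have := hea.ne
    simp_all [Walk.cons_isCycle_iff, Sym2.eq, Sym2.rel_iff', Ne.symm]
  exact absurd (le_length_of_isCycle hg hw) (by simp)

lemma no_hexagon (hg : 7 ≤ H.egirth) {a b c d e f : V} (hab : H.Adj a b) (hbc : H.Adj b c)
    (hcd : H.Adj c d) (hde : H.Adj d e) (hef : H.Adj e f) (hfa : H.Adj f a)
    (hac : a ≠ c) (had : a ≠ d) (hae : a ≠ e) (hbd : b ≠ d) (hbe : b ≠ e)
    (hbf : b ≠ f) (hce : c ≠ e) (hcf : c ≠ f) (hdf : d ≠ f) : False := by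
  have hw :
      (Walk.cons hab (.cons hbc (.cons hcd (.cons hde (.cons hef (.cons hfa .nil)))))).IsCycle := by
    have := hab.ne; have := hbc.ne; have := hcd.ne; have := hde.ne; have := hef.ne; have := hfa.ne
    simp_all [Walk.cons_isCycle_iff, Sym2.eq, Sym2.rel_iff', Ne.symm]
  exact absurd (le_length_of_isCycle hg hw) (by simp)

lemma mem_closedNeighborSet_of_adj_of_sqAdj (hg : 6 ≤ H.egirth) {x y m w : V} (hxy : x ≠ y)
    (hxy' : ¬ H.Adj x y) (hxm : H.Adj x m) (hmy : H.Adj m y) (hwx : H.Adj w x)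
    (hwy : (graphSq H).Adj w y) : w ∈ H.closedNeighborSet m := by
  by_contra hw
  simp only [mem_closedNeighborSet, not_or] at hw
  obtain ⟨hwm, hmw⟩ := hw
  rcases hwy with ⟨hwy, hwy' | ⟨n, hwn, hny⟩⟩
  · exact hwm (eq_of_adj_of_adj_of_five_le_egirth (le_trans (by norm_num) hg) hxy
      hwx.symm hwy' hxm hmy)
  · have hnm : n ≠ m := by rintro rfl; exact hmw hwn.symm
    have hxn : x ≠ n := by rintro rfl; exact hxy' hny
    exact no_pentagon hg hxm hmy hny.symm hwn.symm hwx hxy hxn hnm.symm (Ne.symm hwm) hwy.symm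

lemma mem_closedNeighborSet_of_sqAdj_of_sqAdj (hg : 7 ≤ H.egirth) {x y m w : V} (hxy : x ≠ y)
    (hxy' : ¬ H.Adj x y) (hxm : H.Adj x m) (hmy : H.Adj m y) (hwx : (graphSq H).Adj w x)
    (hwy : (graphSq H).Adj w y) : w ∈ H.closedNeighborSet m := by
  have hg6 : 6 ≤ H.egirth := le_trans (by norm_num) hg
  obtain ⟨hwx_ne, hwx' | ⟨p, hwp, hpx⟩⟩ := hwx
  · exact mem_closedNeighborSet_of_adj_of_sqAdj hg6 hxy hxy' hxm hmy hwx' hwy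
  obtain ⟨hwy_ne, hwy' | ⟨n, hwn, hny⟩⟩ := hwy
  · exact mem_closedNeighborSet_of_adj_of_sqAdj hg6 hxy.symm (fun h => hxy' h.symm) hmy.symm
      hxm.symm hwy' ⟨hwx_ne, .inr ⟨p, hwp, hpx⟩⟩
  by_contra hw
  simp only [mem_closedNeighborSet, not_or] at hw
  obtain ⟨hwm, hmw⟩ := hw
  have hpm : p ≠ m := by rintro rfl; exact hmw hwp.symm
  have hnm : n ≠ m := by rintro rfl; exact hmw hwn.symm
  have hnp : n ≠ p := fun h => hpm (eq_of_adj_of_adj_of_five_le_egirth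
    (le_trans (by norm_num) hg) hxy hpx.symm (h ▸ hny) hxm hmy)
  have hxn : x ≠ n := by rintro rfl; exact hxy' hny
  have hyp : y ≠ p := by rintro rfl; exact hxy' hpx.symm
  exact no_hexagon hg hxm hmy hny.symm hwn.symm hwp hpx hxy hxn hwx_ne.symm hnm.symm
    (Ne.symm hwm) hpm.symm hwy_ne.symm hyp hnp

lemma IsClique.exists_subset_closedNeighborSet (hg : 7 ≤ H.egirth) {Q : Set V}
    (hQ : (graphSq H).IsClique Q) {u : V} (hu : u ∈ Q) : ∃ c, Q ⊆ H.closedNeighborSet c := by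
  by_cases hex : ∃ x ∈ Q, ∃ y ∈ Q, x ≠ y ∧ ¬ H.Adj x y
  · obtain ⟨x, hx, y, hy, hxy, hxy'⟩ := hex
    obtain ⟨m, hxm, hmy⟩ := (hQ hx hy hxy).2.resolve_left hxy'
    refine ⟨m, fun w hw => ?_⟩
    obtain rfl | hwx := eq_or_ne w x
    · exact .inr hxm.symm
    obtain rfl | hwy := eq_or_ne w y
    · exact .inr hmy
    exact mem_closedNeighborSet_of_sqAdj_of_sqAdj hg hxy hxy' hxm hmy (hQ hw hx hwx) (hQ hw hy hwy)
  · push Not at hex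
    exact ⟨u, fun w hw => (eq_or_ne w u).imp id fun hwu => hex u hu w hw hwu.symm⟩

end SimpleGraph

lemma IsMaxClique.exists_eq_closedNeighborSet {H : SimpleGraph V} (hg : 7 ≤ H.egirth) {Q : Set V}
    (hQ : IsMaxClique (graphSq H) Q) {u : V} (hu : u ∈ Q) : ∃ c, Q = H.closedNeighborSet c := by
  obtain ⟨c, hsub⟩ := hQ.1.exists_subset_closedNeighborSet hg hu
  exact ⟨c, (hQ.2 _ (isClique_closedNeighborSet c) hsub).symm⟩

theorem stmt5_general (H : SimpleGraph V) (hgirth : 7 ≤ H.girth)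
    (u : V) (hu : u ∉ (forcedSubgraph (graphSq H)).support) :
    ∃! Q : Set V, IsMaxClique (graphSq H) Q ∧ u ∈ Q := by
  have hg : 7 ≤ H.egirth := (Nat.cast_le.2 hgirth).trans H.egirth.natCast_toNat_le_self
  obtain ⟨M, huM, hM⟩ := (isClique_singleton (G := graphSq H) u).exists_superset_isMaxClique
  rw [Set.singleton_subset_iff] at huM
  refine ⟨M, ⟨hM, huM⟩, fun Q ⟨hQ, huQ⟩ => ?_⟩
  by_contra hne
  obtain ⟨c₁, rfl⟩ := hQ.exists_eq_closedNeighborSet hg huQ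
  obtain ⟨c₂, rfl⟩ := hM.exists_eq_closedNeighborSet hg huM
  obtain ⟨a, ha, b, hb, hua, hub⟩ :=
    exists_adj_of_mem_closedNeighborSet (by rintro rfl; exact hne rfl) huQ huM
  have hclique : (graphSq H).IsClique {u, a, b} :=
    (isClique_closedNeighborSet u).subset (by simp [Set.insert_subset_iff, hua, hub])
  exact hu (mem_support_forcedSubgraph hQ hM hne huQ huM ha hb hua.ne' hub.ne' hclique)

theorem stmt5 (H : SimpleGraph V)
    (hconn : H.Connected) (hgirth : 7 ≤ H.girth) (hnc : graphSq H ≠ ⊤)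
    (u : V) (hu : u ∉ (forcedSubgraph (graphSq H)).support) :
    ∃! Q : Set V, IsMaxClique (graphSq H) Q ∧ u ∈ Q :=
  stmt5_general H hgirth u hu
end

section
/- Let H be a graph containing neither a 3-cycle nor a 5-cycle, and let G = H². Then for every vertex x and every vertex y adjacent to x in H, the neighborhood of y in H equals N_G(y) ∩ (N_G[x] \ N_H(x)). -/
open SimpleGraph

variable {V : Type*}

namespace SimpleGraph

variable {H : SimpleGraph V}

lemma Walk.isCycle_triangle {a b c : V} (hab : H.Adj a b) (hbc : H.Adj b c) (hca : H.Adj c a) :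
    (cons hab (cons hbc (cons hca nil))).IsCycle := by
  simp [Walk.isCycle_def, Walk.isTrail_def, hab.ne, hbc.ne, hca.ne, hab.ne', hca.ne',
    Sym2.eq, Sym2.rel_iff']

lemma Walk.isCycle_pentagon {a b c d e : V} (hab : H.Adj a b) (hbc : H.Adj b c)
    (hcd : H.Adj c d) (hde : H.Adj d e) (hea : H.Adj e a)
    (hac : a ≠ c) (had : a ≠ d) (hbd : b ≠ d) (hbe : b ≠ e) (hce : c ≠ e) :
    (cons hab (cons hbc (cons hcd (cons hde (cons hea nil))))).IsCycle := by
  simp [Walk.isCycle_def, Walk.isTrail_def, hab.ne, hbc.ne, hcd.ne, hde.ne, hea.ne,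
    hab.ne', hea.ne', hac, had, hbd, hbe, hce, hac.symm, had.symm, Sym2.eq, Sym2.rel_iff']

end SimpleGraph

namespace C3C5Free

variable {H : SimpleGraph V}

lemma not_adj_of_adj_of_adj (hfree : C3C5Free H) {a b c : V} (hab : H.Adj a b)
    (hbc : H.Adj b c) : ¬ H.Adj c a := fun hca =>
  (hfree a _ (Walk.isCycle_triangle hab hbc hca)).1 rfl

/-- Without the chords `xz` and `yz`, the paths `x - y - u - z` and `x - w - z` would close up
into a triangle (if `u = w`) or a pentagon. -/
lemma adj_or_adj_of_paths (hfree : C3C5Free H) {x y u w z : V} (hxy : H.Adj x y)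
    (hyu : H.Adj y u) (huz : H.Adj u z) (hxw : H.Adj x w) (hwz : H.Adj w z)
    (hxz : x ≠ z) (hyz : y ≠ z) : H.Adj x z ∨ H.Adj y z := by
  by_contra! ⟨hnxz, hnyz⟩
  have hxu : x ≠ u := by rintro rfl; exact hnxz huz
  have hyw : y ≠ w := by rintro rfl; exact hnyz hwz
  rcases eq_or_ne u w with rfl | huw
  · exact hfree.not_adj_of_adj_of_adj hxy hyu hxw.symm
  · exact (hfree x _ (Walk.isCycle_pentagon hxy hyu huz hwz.symm hxw.symm
      hxu hxz hyz hyw huw)).2 rfl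

end C3C5Free

theorem stmt8 (H : SimpleGraph V) (hfree : C3C5Free H)
    (x y : V) (hxy : H.Adj x y) :
    H.neighborSet y =
      (graphSq H).neighborSet y ∩
        (insert x ((graphSq H).neighborSet x) \ H.neighborSet x) := by
  ext z
  simp only [Set.mem_inter_iff, Set.mem_sdiff, Set.mem_insert_iff, mem_neighborSet, graphSq]
  constructor
  · intro hyz
    have hxz : ¬ H.Adj x z := hfree.not_adj_of_adj_of_adj hyz.symm hxy.symm
    refine ⟨⟨hyz.ne, Or.inl hyz⟩, ?_, hxz⟩
    rcases eq_or_ne z x with rfl | hzx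
    · exact Or.inl rfl
    · exact Or.inr ⟨hzx.symm, Or.inr ⟨y, hxy, hyz⟩⟩
  · rintro ⟨⟨hyz_ne, hyz | ⟨u, hyu, huz⟩⟩, hx, hnxz⟩
    · exact hyz
    rcases hx with rfl | ⟨hxz_ne, hxz | ⟨w, hxw, hwz⟩⟩
    · exact hxy.symm
    · exact absurd hxz hnxz
    · exact (hfree.adj_or_adj_of_paths hxy hyu huz hxw hwz hxz_ne hyz_ne).resolve_left hnxz
end
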